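/- Let n ≥ 1 and let u : ℝⁿ × (0,∞) → ℝ be such that y ↦ u(y,t) is differentiable for every t > 0. Define Nu(x) = sup{ |u(y,t)| : y ∈ ℝⁿ, t > 0, |x−y| < t }, u⁺(x) = sup_{t>0} |u(x,t)|, and Gu(x) = sup{ t ‖∇_y u(y,t)‖ : y ∈ ℝⁿ, t > 0, |x−y| < 2t }, where ∇_y denotes the gradient in the first variable. Then for every s > 0 and every r with 0 < r ≤ 1, { x ∈ ℝⁿ : Nu(x) > s and Gu(x) ≤ s/r } ⊆ { x ∈ ℝⁿ : M(χ_{{u⁺ > s/2}})(x) > r^n / 4^n }. -/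

import Mathlib

open MeasureTheory Set
open scoped ENNReal

/-- The centered Hardy–Littlewood maximal function
`Mg(x) = sup_{R>0} (1/|B(x,R)|) ∫_{B(x,R)} |g(z)| dz` (as an `ℝ≥0∞`-valued function). -/
noncomputable def hlMax {n : ℕ} (g : EuclideanSpace ℝ (Fin n) → ℝ)
    (x : EuclideanSpace ℝ (Fin n)) : ℝ≥0∞ :=
  ⨆ (R : ℝ) (_ : 0 < R),
    (volume (Metric.ball x R))⁻¹ * ∫⁻ z in Metric.ball x R, ENNReal.ofReal |g z|

/-- The nontangential maximal function `Nu(x) = sup_{|x−y|<t} |u(y,t)|`. -/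
noncomputable def ntMax {n : ℕ} (u : EuclideanSpace ℝ (Fin n) → ℝ → ℝ)
    (x : EuclideanSpace ℝ (Fin n)) : ℝ≥0∞ :=
  ⨆ (y : EuclideanSpace ℝ (Fin n)) (t : ℝ) (_ : 0 < t) (_ : dist x y < t),
    ENNReal.ofReal |u y t|

/-- The radial maximal function `u⁺(x) = sup_{t>0} |u(x,t)|`. -/
noncomputable def radMax {n : ℕ} (u : EuclideanSpace ℝ (Fin n) → ℝ → ℝ)
    (x : EuclideanSpace ℝ (Fin n)) : ℝ≥0∞ :=
  ⨆ (t : ℝ) (_ : 0 < t), ENNReal.ofReal |u x t|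

/-- The nontangential gradient maximal function
`Gu(x) = sup_{|x−y|<2t} t ‖∇_y u(y,t)‖`. -/
noncomputable def gradMax {n : ℕ} (u : EuclideanSpace ℝ (Fin n) → ℝ → ℝ)
    (x : EuclideanSpace ℝ (Fin n)) : ℝ≥0∞ :=
  ⨆ (y : EuclideanSpace ℝ (Fin n)) (t : ℝ) (_ : 0 < t) (_ : dist x y < 2 * t),
    ENNReal.ofReal (t * ‖gradient (fun z => u z t) y‖)

/-!
Pick `(y, t)` in the cone at `x` with `|u(y,t)| > s`. Since `t ‖∇u(·,t)‖ ≤ s/r` on the wider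
cone, the mean value theorem keeps `|u(·,t)| > s/2` on the ball `B(y, rt/2)`, so this ball lies
in `{u⁺ > s/2}`. It also lies in `B(x, 3t/2)`, whence
`M(χ_{{u⁺ > s/2}})(x) ≥ (rt/2 ÷ 3t/2)ⁿ = (r/3)ⁿ > (r/4)ⁿ`.
-/

open Metric Module

theorem MeasureTheory.Measure.addHaar_ball_inv_mul_addHaar_ball {E : Type*}
    [NormedAddCommGroup E] [NormedSpace ℝ E] [MeasurableSpace E] [BorelSpace E]
    [FiniteDimensional ℝ E]
    (μ : Measure E) [μ.IsAddHaarMeasure] (x y : E) {R ρ : ℝ} (hR : 0 < R) (hρ : 0 < ρ) :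
    (μ (ball x R))⁻¹ * μ (ball y ρ) = ENNReal.ofReal ((ρ / R) ^ finrank ℝ E) := by
  have hV₀ : μ (ball 0 1) ≠ 0 := (measure_ball_pos μ 0 one_pos).ne'
  have hV : μ (ball 0 1) ≠ ⊤ := measure_ball_lt_top.ne
  have hR₀ : ENNReal.ofReal (R ^ finrank ℝ E) ≠ 0 := by positivity
  rw [Measure.addHaar_ball_of_pos μ x hR, Measure.addHaar_ball_of_pos μ y hρ,
    ENNReal.mul_inv (Or.inl hR₀) (Or.inl ENNReal.ofReal_ne_top), mul_mul_mul_comm,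
    ENNReal.inv_mul_cancel hV₀ hV, mul_one, mul_comm, ← div_eq_mul_inv,
    ← ENNReal.ofReal_div_of_pos (by positivity), div_pow]

theorem norm_sub_mul_le_norm_of_norm_fderiv_le {E F : Type*} [NormedAddCommGroup E]
    [NormedSpace ℝ E] [NormedAddCommGroup F] [NormedSpace ℝ F] {f : E → F} {C ρ : ℝ} {y z : E}
    (hf : ∀ w ∈ ball y ρ, DifferentiableAt ℝ f w) (hC : ∀ w ∈ ball y ρ, ‖fderiv ℝ f w‖ ≤ C)
    (hz : z ∈ ball y ρ) : ‖f y‖ - C * ρ ≤ ‖f z‖ := by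
  have hy : y ∈ ball y ρ := mem_ball_self (pos_of_mem_ball hz)
  have hC₀ : 0 ≤ C := (norm_nonneg _).trans (hC y hy)
  have hmvt : ‖f z - f y‖ ≤ C * ‖z - y‖ :=
    (convex_ball y ρ).norm_image_sub_le_of_norm_fderiv_le hf hC hy hz
  have hzy : C * ‖z - y‖ ≤ C * ρ := by
    rw [← dist_eq_norm]
    exact mul_le_mul_of_nonneg_left (mem_ball.1 hz).le hC₀
  linarith [norm_sub_norm_le (f y) (f z), norm_sub_rev (f y) (f z)]

section MaximalFunctions

variable {n : ℕ}

theorem ofReal_div_pow_le_hlMax_indicator {E : Set (EuclideanSpace ℝ (Fin n))}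
    {x y : EuclideanSpace ℝ (Fin n)} {ρ R : ℝ} (hρ : 0 < ρ) (hR : 0 < R)
    (hE : ball y ρ ⊆ E) (hball : ball y ρ ⊆ ball x R) :
    ENNReal.ofReal ((ρ / R) ^ n) ≤ hlMax (E.indicator fun _ => (1 : ℝ)) x := by
  have hmass : volume (ball y ρ) ≤
      ∫⁻ z in ball x R, ENNReal.ofReal |E.indicator (fun _ => (1 : ℝ)) z| :=
    calc volume (ball y ρ) = ∫⁻ _ in ball y ρ, 1 := (setLIntegral_one _).symm
      _ ≤ ∫⁻ z in ball y ρ, ENNReal.ofReal |E.indicator (fun _ => (1 : ℝ)) z| :=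
        setLIntegral_mono' measurableSet_ball fun z hz => by
          simp [indicator_of_mem (hE hz)]
      _ ≤ _ := lintegral_mono_set hball
  calc ENNReal.ofReal ((ρ / R) ^ n)
      = (volume (ball x R))⁻¹ * volume (ball y ρ) := by
        rw [Measure.addHaar_ball_inv_mul_addHaar_ball volume x y hR hρ,
          finrank_euclideanSpace_fin]
    _ ≤ (volume (ball x R))⁻¹ *
        ∫⁻ z in ball x R, ENNReal.ofReal |E.indicator (fun _ => (1 : ℝ)) z| := by gcongr
    _ ≤ hlMax (E.indicator fun _ => (1 : ℝ)) x :=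
      le_iSup₂ (f := fun R (_ : 0 < R) => (volume (ball x R))⁻¹ *
        ∫⁻ z in ball x R, ENNReal.ofReal |E.indicator (fun _ => (1 : ℝ)) z|) R hR

variable {u : EuclideanSpace ℝ (Fin n) → ℝ → ℝ}

theorem exists_lt_abs_of_ofReal_lt_ntMax {x : EuclideanSpace ℝ (Fin n)} {s : ℝ} (hs : 0 ≤ s)
    (h : ENNReal.ofReal s < ntMax u x) : ∃ y t, 0 < t ∧ dist x y < t ∧ s < |u y t| := by
  simp only [ntMax, lt_iSup_iff] at h
  obtain ⟨y, t, ht, hxy, hlt⟩ := h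
  exact ⟨y, t, ht, hxy, (ENNReal.ofReal_lt_ofReal_iff_of_nonneg hs).1 hlt⟩

theorem ofReal_lt_radMax {z : EuclideanSpace ℝ (Fin n)} {c t : ℝ} (hc : 0 ≤ c) (ht : 0 < t)
    (h : c < |u z t|) : ENNReal.ofReal c < radMax u z :=
  ((ENNReal.ofReal_lt_ofReal_iff_of_nonneg hc).2 h).trans_le <|
    le_iSup₂ (f := fun t (_ : 0 < t) => ENNReal.ofReal |u z t|) t ht

theorem norm_fderiv_le_of_gradMax_le {x w : EuclideanSpace ℝ (Fin n)} {t M : ℝ} (hM : 0 ≤ M)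
    (ht : 0 < t) (hw : dist x w < 2 * t) (h : gradMax u x ≤ ENNReal.ofReal M) :
    ‖fderiv ℝ (fun z => u z t) w‖ ≤ M / t := by
  have hle : ENNReal.ofReal (t * ‖gradient (fun z => u z t) w‖) ≤ gradMax u x :=
    le_iSup_of_le w <| le_iSup_of_le t <| le_iSup_of_le ht <| le_iSup_of_le hw le_rfl
  have htM : t * ‖gradient (fun z => u z t) w‖ ≤ M :=
    (ENNReal.ofReal_le_ofReal_iff hM).1 (hle.trans h)
  rw [le_div_iff₀ ht, mul_comm]
  rwa [gradient, LinearIsometryEquiv.norm_map] at htM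

end MaximalFunctions

theorem stmt_13 (n : ℕ) (hn : 1 ≤ n)
    (u : EuclideanSpace ℝ (Fin n) → ℝ → ℝ)
    (hdiff : ∀ t : ℝ, 0 < t → Differentiable ℝ (fun y => u y t))
    (s r : ℝ) (hs : 0 < s) (hr0 : 0 < r) (hr1 : r ≤ 1) :
    {x | ENNReal.ofReal s < ntMax u x ∧ gradMax u x ≤ ENNReal.ofReal (s / r)} ⊆
      {x | ENNReal.ofReal (r ^ n / 4 ^ n) <
        hlMax (Set.indicator {z | ENNReal.ofReal (s / 2) < radMax u z}
          (fun _ => (1:ℝ))) x} := by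
  rintro x ⟨hN, hG⟩
  obtain ⟨y, t, ht, hxy, hsy⟩ := exists_lt_abs_of_ofReal_lt_ntMax hs.le hN
  have hρ : 0 < r * t / 2 := by positivity
  have hcone : ball y (r * t / 2) ⊆ ball x (3 * t / 2) := fun z hz => by
    rw [mem_ball, dist_comm]
    nlinarith [dist_triangle x y z, mem_ball'.1 hz]
  have hlevel : ball y (r * t / 2) ⊆ {z | ENNReal.ofReal (s / 2) < radMax u z} := fun z hz => by
    have hgrad : ∀ w ∈ ball y (r * t / 2), ‖fderiv ℝ (fun z => u z t) w‖ ≤ s / r / t :=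
      fun w hw => norm_fderiv_le_of_gradMax_le (by positivity) ht
        (by linarith [mem_ball'.1 (hcone hw)]) hG
    have hlow := norm_sub_mul_le_norm_of_norm_fderiv_le
      (fun w _ => (hdiff t ht).differentiableAt) hgrad hz
    have hsr : s / r / t * (r * t / 2) = s / 2 := by field_simp
    simp only [Real.norm_eq_abs, hsr] at hlow
    exact ofReal_lt_radMax (by positivity) ht (by linarith)
  calc ENNReal.ofReal (r ^ n / 4 ^ n) < ENNReal.ofReal ((r * t / 2 / (3 * t / 2)) ^ n) := by
        rw [ENNReal.ofReal_lt_ofReal_iff (by positivity), ← div_pow]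
        exact pow_lt_pow_left₀ (by field_simp; linarith) (by positivity) (by omega)
    _ ≤ _ := ofReal_div_pow_le_hlMax_indicator hρ (by positivity) hlevel hcone
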